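/- arXiv:2204.10861 — 4 statements merged into one kernel-verified Lean document; each statement's English description precedes it below -/
import Mathlib

section
/- Let N be a G-graded near-ring and P a graded weakly prime ideal of N. If P is not a graded prime ideal of N, then P² = {0} (i.e., the product PP of P with itself is the zero ideal). -/
open Pointwise

/-- A (right) near-ring: an additive group (not necessarily abelian) with an
associative multiplication that is right distributive over addition. -/
class NearRing (N : Type*) extends AddGroup N, Semigroup N where
  right_distrib : ∀ a b c : N, (a + b) * c = a * c + b * c

/-- A (two-sided) ideal of a near-ring. -/
structure NearRingIdeal (N : Type*) [NearRing N] where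
  carrier : AddSubgroup N
  normal : carrier.Normal
  mul_mem_right : ∀ i n : N, i ∈ carrier → i * n ∈ carrier
  quasi_left : ∀ m n i : N, i ∈ carrier → m * (n + i) - m * n ∈ carrier

instance (N : Type*) [NearRing N] : SetLike (NearRingIdeal N) N where
  coe I := I.carrier
  coe_injective := by
    rintro ⟨a, _, _, _⟩ ⟨b, _, _, _⟩ h
    congr
    exact SetLike.coe_injective h

/-- A `G`-grading on a near-ring `N`: a family of additive normal subgroups
whose internal direct sum is `N`, compatible with multiplication. -/
structure NearRingGrading (G : Type*) [Monoid G] (N : Type*) [NearRing N] where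
  component : G → AddSubgroup N
  normal : ∀ σ : G, (component σ).Normal
  mul_mem : ∀ σ τ : G, ∀ x ∈ component σ, ∀ y ∈ component τ, x * y ∈ component (σ * τ)
  span_top : (⨆ σ : G, component σ) = ⊤
  independent : ∀ σ : G, component σ ⊓ (⨆ τ ∈ ({σ}ᶜ : Set G), component τ) = ⊥

variable {G : Type*} [Monoid G] {N : Type*} [NearRing N]

/-- An ideal is graded if it is generated by its homogeneous elements. -/
def NearRingGrading.IsGradedIdeal (gr : NearRingGrading G N) (I : NearRingIdeal N) : Prop :=
  I.carrier = AddSubgroup.closure ((I : Set N) ∩ ⋃ σ : G, (gr.component σ : Set N))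

/-- The product `IJ` of two ideals, as the set of products of their elements. -/
def idealProd (I J : NearRingIdeal N) : Set N := (I : Set N) * (J : Set N)

/-- A graded prime ideal of a graded near-ring. -/
def NearRingGrading.IsGradedPrime (gr : NearRingGrading G N) (P : NearRingIdeal N) : Prop :=
  gr.IsGradedIdeal P ∧ ∀ I J : NearRingIdeal N, gr.IsGradedIdeal I → gr.IsGradedIdeal J →
    idealProd I J ⊆ (P : Set N) → (I : Set N) ⊆ (P : Set N) ∨ (J : Set N) ⊆ (P : Set N)

/-- A graded weakly prime ideal of a graded near-ring. -/
def NearRingGrading.IsGradedWeaklyPrime (gr : NearRingGrading G N) (P : NearRingIdeal N) : Prop :=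
  gr.IsGradedIdeal P ∧ ∀ I J : NearRingIdeal N, gr.IsGradedIdeal I → gr.IsGradedIdeal J →
    idealProd I J ≠ {0} → idealProd I J ⊆ (P : Set N) →
      (I : Set N) ⊆ (P : Set N) ∨ (J : Set N) ⊆ (P : Set N)

/-- A graded almost prime ideal of a graded near-ring. -/
def NearRingGrading.IsGradedAlmostPrime (gr : NearRingGrading G N) (P : NearRingIdeal N) : Prop :=
  gr.IsGradedIdeal P ∧ ∀ I J : NearRingIdeal N, gr.IsGradedIdeal I → gr.IsGradedIdeal J →
    idealProd I J ⊆ (P : Set N) → ¬ idealProd I J ⊆ idealProd P P →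
      (I : Set N) ⊆ (P : Set N) ∨ (J : Set N) ⊆ (P : Set N)

/-! If `P² ≠ {0}` and `IJ ⊆ P` for graded ideals `I`, `J`, then `(I + P)(J + P)` is again
contained in `P` and contains `P² ≠ {0}`, so weak primeness applies to the graded ideals
`I + P` and `J + P` and yields `I ⊆ P` or `J ⊆ P`. -/

namespace NearRing

variable {N : Type*} [NearRing N]

theorem zero_mul (a : N) : (0 : N) * a = 0 := by
  have h : (0 : N) * a + 0 * a = 0 * a + 0 := by
    rw [← NearRing.right_distrib, add_zero, add_zero]
  exact add_left_cancel h

end NearRing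

namespace NearRingIdeal

variable {N : Type*} [NearRing N]

def sup (I J : NearRingIdeal N) : NearRingIdeal N where
  carrier := I.carrier ⊔ J.carrier
  normal := @AddSubgroup.sup_normal _ _ _ _ I.normal J.normal
  mul_mem_right := by
    have := J.normal
    intro x n hx
    rw [← SetLike.mem_coe, AddSubgroup.add_normal] at hx
    obtain ⟨a, ha, b, hb, rfl⟩ := hx
    rw [NearRing.right_distrib]
    exact add_mem (AddSubgroup.mem_sup_left (I.mul_mem_right a n ha))
      (AddSubgroup.mem_sup_right (J.mul_mem_right b n hb))
  quasi_left := by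
    have := J.normal
    intro m n x hx
    rw [← SetLike.mem_coe, AddSubgroup.add_normal] at hx
    obtain ⟨a, ha, b, hb, rfl⟩ := hx
    rw [← add_assoc, ← sub_add_sub_cancel _ (m * (n + a))]
    exact add_mem (AddSubgroup.mem_sup_right (J.quasi_left m (n + a) b hb))
      (AddSubgroup.mem_sup_left (I.quasi_left m n a ha))

theorem coe_sup (I J : NearRingIdeal N) : (I.sup J : Set N) = (I : Set N) + (J : Set N) :=
  @AddSubgroup.add_normal _ _ I.carrier J.carrier J.normal

theorem subset_sup_left (I J : NearRingIdeal N) : (I : Set N) ⊆ (I.sup J : Set N) :=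
  fun x hx => (coe_sup I J).symm ▸ Set.mem_add.mpr ⟨x, hx, 0, J.carrier.zero_mem, add_zero x⟩

theorem subset_sup_right (I J : NearRingIdeal N) : (J : Set N) ⊆ (I.sup J : Set N) :=
  fun x hx => (coe_sup I J).symm ▸ Set.mem_add.mpr ⟨0, I.carrier.zero_mem, x, hx, zero_add x⟩

end NearRingIdeal

section GradedIdeal

variable {G : Type*} [Monoid G] {N : Type*} [NearRing N]

open NearRingIdeal

theorem NearRingGrading.IsGradedIdeal.sup {gr : NearRingGrading G N} {I J : NearRingIdeal N}
    (hI : gr.IsGradedIdeal I) (hJ : gr.IsGradedIdeal J) : gr.IsGradedIdeal (I.sup J) := by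
  refine le_antisymm (sup_le ?_ ?_) (AddSubgroup.closure_le _ |>.mpr Set.inter_subset_left)
  · rw [hI]
    exact AddSubgroup.closure_mono (Set.inter_subset_inter_left _ (subset_sup_left I J))
  · rw [hJ]
    exact AddSubgroup.closure_mono (Set.inter_subset_inter_left _ (subset_sup_right I J))

end GradedIdeal

section IdealProd

variable {N : Type*} [NearRing N]

open NearRingIdeal

theorem zero_mem_idealProd (I J : NearRingIdeal N) : (0 : N) ∈ idealProd I J :=
  ⟨0, I.carrier.zero_mem, 0, J.carrier.zero_mem, NearRing.zero_mul 0⟩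

theorem idealProd_eq_zero_of_subset {I J : NearRingIdeal N} (h : idealProd I J ⊆ {0}) :
    idealProd I J = {0} :=
  h.antisymm (Set.singleton_subset_iff.mpr (zero_mem_idealProd I J))

theorem idealProd_sup_left_subset {I J P : NearRingIdeal N} (h : idealProd I J ⊆ P) :
    idealProd (I.sup P) J ⊆ P := by
  rintro _ ⟨x, hx, j, hj, rfl⟩
  obtain ⟨i, hi, p, hp, rfl⟩ := Set.mem_add.mp (coe_sup I P ▸ hx)
  show (i + p) * j ∈ P.carrier
  rw [NearRing.right_distrib]
  exact P.carrier.add_mem (h ⟨i, hi, j, hj, rfl⟩) (P.mul_mem_right p j hp)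

/-- Without left distributivity, `i (j + p) - i j ∈ P` comes from `quasi_left` instead. -/
theorem idealProd_sup_right_subset {I J P : NearRingIdeal N} (h : idealProd I J ⊆ P) :
    idealProd I (J.sup P) ⊆ P := by
  rintro _ ⟨i, hi, y, hy, rfl⟩
  obtain ⟨j, hj, p, hp, rfl⟩ := Set.mem_add.mp (coe_sup J P ▸ hy)
  show i * (j + p) ∈ P.carrier
  rw [← sub_add_cancel (i * (j + p)) (i * j)]
  exact P.carrier.add_mem (P.quasi_left i j p hp) (h ⟨i, hi, j, hj, rfl⟩)

end IdealProd

section GradedPrime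

variable {G : Type*} [Monoid G] {N : Type*} [NearRing N]

open NearRingIdeal

theorem NearRingGrading.IsGradedWeaklyPrime.isGradedPrime {gr : NearRingGrading G N}
    {P : NearRingIdeal N} (hP : gr.IsGradedWeaklyPrime P) (hPP : idealProd P P ≠ {0}) :
    gr.IsGradedPrime P := by
  refine ⟨hP.1, fun I J hI hJ hIJ => ?_⟩
  have hsub : idealProd (I.sup P) (J.sup P) ⊆ P :=
    idealProd_sup_right_subset (idealProd_sup_left_subset hIJ)
  have hne : idealProd (I.sup P) (J.sup P) ≠ {0} := fun h0 =>
    hPP (idealProd_eq_zero_of_subset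
      (h0 ▸ Set.mul_subset_mul (subset_sup_right I P) (subset_sup_right J P)))
  exact (hP.2 _ _ (hI.sup hP.1) (hJ.sup hP.1) hne hsub).imp
    (subset_sup_left I P).trans (subset_sup_left J P).trans

end GradedPrime

/-- If a graded weakly prime ideal `P` is not graded prime, then `P² = {0}`. -/
theorem weaklyPrime_not_prime_sq_eq_zero (gr : NearRingGrading G N) (P : NearRingIdeal N)
    (hwp : gr.IsGradedWeaklyPrime P) (hnp : ¬ gr.IsGradedPrime P) :
    idealProd P P = {0} :=
  not_not.mp fun hPP => hnp (hwp.isGradedPrime hPP)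
end

section
/- Let N be a G-graded near-ring, A a totally ordered index set, and (P_a)_{a∈A} a family of graded weakly prime ideals of N that is monotone, i.e., P_a ⊆ P_b whenever a ≤ b. Then the intersection P = ⋂_{a∈A} P_a is a graded weakly prime ideal of N. -/
open Pointwise

variable {G : Type*} [Monoid G] {N : Type*} [NearRing N]

/-! Weak primality passes to the intersection because, if `I ⊄ P a` and `J ⊄ P b`, then
`IJ ⊆ P (min a b)` forces `I` or `J` into `P (min a b)`, hence into `P a` or `P b`.
Gradedness passes because homogeneous components are unique: every homogeneous component of
an element of a graded ideal lies in that ideal, so an element of every `P a` is the finite sum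
of its homogeneous components, each of which lies in every `P a`. -/

namespace AddSubgroup

variable {N ι : Type*} [AddGroup N] {C : ι → AddSubgroup N}

theorem mem_of_add_mem_of_le_iSup_inf [∀ i, (C i).Normal] (hind : iSupIndep C)
    {K : AddSubgroup N} [K.Normal] (hK : K ≤ ⨆ i, K ⊓ C i) {σ : ι} {y z : N}
    (hy : y ∈ C σ) (hz : z ∈ ⨆ (τ) (_ : τ ≠ σ), C τ) (hyz : y + z ∈ K) : y ∈ K := by
  obtain ⟨y', hy', z', hz', heq⟩ :=
    mem_sup_of_normal_right.1 (iSup_split_single (fun i => K ⊓ C i) σ ▸ hK hyz)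
  have hz'C : z' ∈ ⨆ (τ) (_ : τ ≠ σ), C τ :=
    (iSup₂_mono fun _ _ => inf_le_right : ⨆ (τ) (_ : τ ≠ σ), K ⊓ C τ ≤ _) hz'
  have hpair := add_injective_of_disjoint (hind σ)
    (a₁ := (⟨y', hy'.2⟩, ⟨z', hz'C⟩)) (a₂ := (⟨y, hy⟩, ⟨z, hz⟩)) heq
  have hyy' : y' = y := congrArg (fun p => (p.1 : N)) hpair
  exact hyy' ▸ hy'.1

theorem exists_finset_of_mem_iSup {x : N} (hx : x ∈ ⨆ i, C i) :
    ∃ t : Finset ι, x ∈ ⨆ i ∈ t, C i := by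
  have hdir : Directed (· ≤ ·) fun t : Finset ι => ⨆ i ∈ t, C i :=
    Monotone.directed_le fun _ _ h => biSup_mono fun _ hi => Finset.mem_of_subset h hi
  rw [iSup_eq_iSup_finset] at hx
  exact (mem_iSup_of_directed hdir).1 hx

theorem iInf_le_iSup_iInf_inf [∀ i, (C i).Normal] {A : Type*} (hspan : ⨆ i, C i = ⊤)
    (hind : iSupIndep C) (K : A → AddSubgroup N) [∀ a, (K a).Normal]
    (hK : ∀ a, K a ≤ ⨆ i, K a ⊓ C i) :
    ⨅ a, K a ≤ ⨆ i, (⨅ a, K a) ⊓ C i := by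
  classical
  intro x hx
  obtain ⟨t, hxt⟩ := exists_finset_of_mem_iSup (hspan ▸ mem_top x)
  induction t using Finset.induction_on generalizing x with
  | empty =>
    simp only [Finset.notMem_empty, iSup_false, iSup_bot, mem_bot] at hxt
    exact hxt ▸ zero_mem _
  | insert σ t hσ ih =>
    rw [Finset.iSup_insert, mem_sup_of_normal_right] at hxt
    obtain ⟨y, hy, z, hz, rfl⟩ := hxt
    have hzC : z ∈ ⨆ (τ) (_ : τ ≠ σ), C τ :=
      (biSup_mono fun _ hτ => ne_of_mem_of_not_mem hτ hσ : ⨆ τ ∈ t, C τ ≤ _) hz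
    have hyK : y ∈ ⨅ a, K a :=
      mem_iInf.2 fun a => mem_of_add_mem_of_le_iSup_inf hind (hK a) hy hzC (mem_iInf.1 hx a)
    have hzK : z ∈ ⨅ a, K a := by simpa using add_mem (neg_mem hyK) hx
    exact add_mem (mem_iSup_of_mem σ ⟨hyK, hy⟩) (ih hzK hz)

end AddSubgroup

namespace NearRingGrading

variable (gr : NearRingGrading G N)

theorem iSupIndep_component : iSupIndep gr.component := by
  intro σ
  rw [disjoint_iff, ← gr.independent σ]
  simp only [Set.mem_compl_iff, Set.mem_singleton_iff]

theorem closure_inter_homogeneous (K : AddSubgroup N) :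
    AddSubgroup.closure ((K : Set N) ∩ ⋃ σ, (gr.component σ : Set N)) =
      ⨆ σ, K ⊓ gr.component σ := by
  simp only [Set.inter_iUnion, AddSubgroup.closure_iUnion, ← AddSubgroup.coe_inf,
    AddSubgroup.closure_eq]

theorem isGradedIdeal_iff (I : NearRingIdeal N) :
    gr.IsGradedIdeal I ↔ I.carrier ≤ ⨆ σ, I.carrier ⊓ gr.component σ := by
  rw [IsGradedIdeal, show (I : Set N) = I.carrier from rfl, closure_inter_homogeneous]
  exact ⟨le_of_eq, fun h => le_antisymm h (iSup_le fun _ => inf_le_left)⟩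

theorem isGradedIdeal_of_coe_eq_iInter {A : Type*} (P : A → NearRingIdeal N)
    (hP : ∀ a, gr.IsGradedIdeal (P a)) (Q : NearRingIdeal N)
    (hQ : (Q : Set N) = ⋂ a, (P a : Set N)) : gr.IsGradedIdeal Q := by
  have : ∀ σ, (gr.component σ).Normal := gr.normal
  have : ∀ a, (P a).carrier.Normal := fun a => (P a).normal
  have hQP : Q.carrier = ⨅ a, (P a).carrier :=
    SetLike.coe_injective (by rw [AddSubgroup.coe_iInf]; exact hQ)
  rw [isGradedIdeal_iff, hQP]
  exact AddSubgroup.iInf_le_iSup_iInf_inf gr.span_top gr.iSupIndep_component _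
    fun a => (gr.isGradedIdeal_iff (P a)).1 (hP a)

end NearRingGrading

theorem iInter_weaklyPrime_of_chain_general {A : Type*} [LinearOrder A]
    (gr : NearRingGrading G N) (P : A → NearRingIdeal N)
    (hwp : ∀ a : A, gr.IsGradedWeaklyPrime (P a))
    (hmono : ∀ a b : A, a ≤ b → (P a : Set N) ⊆ (P b : Set N))
    (Q : NearRingIdeal N) (hQ : (Q : Set N) = ⋂ a : A, (P a : Set N)) :
    gr.IsGradedWeaklyPrime Q := by
  refine ⟨gr.isGradedIdeal_of_coe_eq_iInter P (fun a => (hwp a).1) Q hQ, ?_⟩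
  intro I J hI hJ hne hIJ
  simp only [hQ, Set.subset_iInter_iff] at hIJ ⊢
  by_contra! h
  obtain ⟨⟨a, ha⟩, ⟨b, hb⟩⟩ := h
  rcases (hwp (min a b)).2 I J hI hJ hne (hIJ _) with h | h
  · exact ha (h.trans (hmono _ _ (min_le_left a b)))
  · exact hb (h.trans (hmono _ _ (min_le_right a b)))

/-- The intersection of a monotone chain of graded weakly prime ideals
is graded weakly prime. -/
theorem iInter_weaklyPrime_of_chain {A : Type*} [LinearOrder A] [Nonempty A]
    (gr : NearRingGrading G N) (P : A → NearRingIdeal N)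
    (hwp : ∀ a : A, gr.IsGradedWeaklyPrime (P a))
    (hmono : ∀ a b : A, a ≤ b → (P a : Set N) ⊆ (P b : Set N))
    (Q : NearRingIdeal N) (hQ : (Q : Set N) = ⋂ a : A, (P a : Set N)) :
    gr.IsGradedWeaklyPrime Q :=
  iInter_weaklyPrime_of_chain_general gr P hwp hmono Q hQ
end

section
/- Let N and M be G-graded near-rings and φ : N → M a surjective graded near-ring homomorphism. If P is a graded weakly prime ideal of N containing ker(φ), then φ(P) is a graded weakly prime ideal of M. -/
open Pointwise

variable {G : Type*} [Monoid G] {N : Type*} [NearRing N]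

/-- A homomorphism of near-rings. -/
structure NearRingHom (N M : Type*) [NearRing N] [NearRing M] where
  toFun : N → M
  map_add : ∀ x y : N, toFun (x + y) = toFun x + toFun y
  map_mul : ∀ x y : N, toFun (x * y) = toFun x * toFun y

/-! Pull graded ideals `I, J` of `M` back along `φ`: `φ⁻¹(I)` and `φ⁻¹(J)` are graded ideals
of `N` whose product maps onto `IJ`, so it is nonzero when `IJ` is, and it lies in
`φ⁻¹(φ(P)) = P` since `ker φ ⊆ P`; weak primeness of `P` then transfers to `φ(P)`.
Gradedness of `φ⁻¹(K)` rests on two facts about a surjective degree-preserving map: it maps each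
component onto the corresponding component, and its kernel is generated by its homogeneous
elements. Both come from the independence of the components and from splitting an element as
`a + b` with `a` of degree `σ` and `b` in the sum of the other components, which is possible
because the components are normal. -/

namespace NearRingHom

variable {M : Type*} [NearRing M] (φ : NearRingHom N M)

def toAddMonoidHom : N →+ M := AddMonoidHom.mk' φ.toFun φ.map_add

def toMulHom : N →ₙ* M := ⟨φ.toFun, φ.map_mul⟩

@[simp] theorem coe_toAddMonoidHom : ⇑φ.toAddMonoidHom = φ.toFun := rfl

@[simp] theorem coe_toMulHom : ⇑φ.toMulHom = φ.toFun := rfl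

end NearRingHom

namespace NearRingIdeal

variable {M : Type*} [NearRing M] (φ : NearRingHom N M)

def comap (K : NearRingIdeal M) : NearRingIdeal N where
  carrier := K.carrier.comap φ.toAddMonoidHom
  normal := K.normal.comap _
  mul_mem_right i n hi := by
    simpa [AddSubgroup.mem_comap, φ.map_mul] using K.mul_mem_right _ (φ.toFun n) hi
  quasi_left m n i hi := by
    show φ.toAddMonoidHom (m * (n + i) - m * n) ∈ K.carrier
    simpa [map_sub, φ.map_mul, φ.map_add] using K.quasi_left (φ.toFun m) (φ.toFun n) _ hi

@[simp] theorem coe_comap (K : NearRingIdeal M) : (comap φ K : Set N) = φ.toFun ⁻¹' K := rfl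

variable {φ}

def map (hφ : Function.Surjective φ.toFun) (I : NearRingIdeal N) : NearRingIdeal M where
  carrier := I.carrier.map φ.toAddMonoidHom
  normal := I.normal.map _ hφ
  mul_mem_right i n hi := by
    obtain ⟨a, ha, rfl⟩ := AddSubgroup.mem_map.mp hi
    obtain ⟨b, rfl⟩ := hφ n
    exact ⟨a * b, I.mul_mem_right a b ha, φ.map_mul a b⟩
  quasi_left m n i hi := by
    obtain ⟨c, hc, rfl⟩ := AddSubgroup.mem_map.mp hi
    obtain ⟨a, rfl⟩ := hφ m
    obtain ⟨b, rfl⟩ := hφ n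
    refine ⟨a * (b + c) - a * b, I.quasi_left a b c hc, ?_⟩
    simp [map_sub, φ.map_mul, φ.map_add]

@[simp] theorem coe_map (hφ : Function.Surjective φ.toFun) (I : NearRingIdeal N) :
    (map hφ I : Set M) = φ.toFun '' I :=
  AddSubgroup.coe_map _ _

theorem preimage_image_eq_of_ker_subset {I : NearRingIdeal N}
    (hker : {x : N | φ.toFun x = 0} ⊆ (I : Set N)) : φ.toFun ⁻¹' (φ.toFun '' I) = I := by
  have := AddSubgroup.comap_map_eq_self (f := φ.toAddMonoidHom) (H := I.carrier) hker
  exact congrArg ((↑) : AddSubgroup N → Set N) this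

theorem image_idealProd_comap (hφ : Function.Surjective φ.toFun) (I J : NearRingIdeal M) :
    φ.toFun '' idealProd (comap φ I) (comap φ J) = idealProd I J := by
  rw [idealProd, ← φ.coe_toMulHom, Set.image_mul, coe_comap, coe_comap, φ.coe_toMulHom,
    Set.image_preimage_eq _ hφ, Set.image_preimage_eq _ hφ, idealProd]

end NearRingIdeal

def NearRingGrading.IsGraded (gr : NearRingGrading G N) (H : AddSubgroup N) : Prop :=
  H = AddSubgroup.closure ((H : Set N) ∩ ⋃ σ : G, (gr.component σ : Set N))

namespace NearRingGrading

variable (gr : NearRingGrading G N)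

theorem exists_finset_mem_iSup (x : N) : ∃ s : Finset G, x ∈ ⨆ σ ∈ s, gr.component σ := by
  have hx : x ∈ ⨆ σ, gr.component σ := by
    rw [gr.span_top]
    exact AddSubgroup.mem_top x
  rw [iSup_eq_iSup_finset] at hx
  have hmono : Monotone fun s : Finset G => ⨆ σ ∈ s, gr.component σ :=
    fun _ _ hst => biSup_mono fun _ h => hst h
  exact (AddSubgroup.mem_iSup_of_directed hmono.directed_le).mp hx

theorem exists_mem_component_add_eq (σ : G) (x : N) :
    ∃ a ∈ gr.component σ, ∃ b ∈ ⨆ τ ∈ ({σ}ᶜ : Set G), gr.component τ, a + b = x := by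
  have hx : x ∈ gr.component σ ⊔ ⨆ (τ) (_ : τ ≠ σ), gr.component τ := by
    rw [← iSup_split_single, gr.span_top]
    exact AddSubgroup.mem_top x
  have := gr.normal σ
  exact AddSubgroup.mem_sup_of_normal_left.mp hx

theorem eq_zero_of_mem_of_mem_iSup {σ : G} {x : N} (hσ : x ∈ gr.component σ)
    (hne : x ∈ ⨆ τ ∈ ({σ}ᶜ : Set G), gr.component τ) : x = 0 := by
  have : x ∈ gr.component σ ⊓ ⨆ τ ∈ ({σ}ᶜ : Set G), gr.component τ := ⟨hσ, hne⟩
  rwa [gr.independent σ, AddSubgroup.mem_bot] at this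

variable {M : Type*} [NearRing M] {gr} (grM : NearRingGrading G M) {f : N →+ M}
  (hf : ∀ σ, ∀ x ∈ gr.component σ, f x ∈ grM.component σ)
include hf

theorem map_mem_biSup {p : G → Prop} {x : N} (hx : x ∈ ⨆ σ, ⨆ (_ : p σ), gr.component σ) :
    f x ∈ ⨆ σ, ⨆ (_ : p σ), grM.component σ := by
  have : (⨆ σ, ⨆ (_ : p σ), gr.component σ).map f ≤ ⨆ σ, ⨆ (_ : p σ), grM.component σ := by
    simp only [AddSubgroup.map_iSup]
    exact iSup₂_mono fun σ _ => AddSubgroup.map_le_iff_le_comap.mpr fun y hy => hf σ y hy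
  exact this ⟨x, hx, rfl⟩

theorem map_component_eq (hsurj : Function.Surjective f) (σ : G) :
    (gr.component σ).map f = grM.component σ := by
  refine le_antisymm (AddSubgroup.map_le_iff_le_comap.mpr fun x hx => hf σ x hx) fun y hy => ?_
  obtain ⟨x, rfl⟩ := hsurj y
  obtain ⟨a, ha, b, hb, rfl⟩ := gr.exists_mem_component_add_eq σ x
  rw [map_add] at hy
  have hfb : f b = 0 := by
    refine grM.eq_zero_of_mem_of_mem_iSup ?_ (map_mem_biSup grM hf hb)
    simpa using add_mem (neg_mem (hf σ a ha)) hy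
  exact ⟨a, ha, by rw [map_add, hfb, add_zero]⟩

theorem mem_of_map_eq_zero {T : AddSubgroup N}
    (hT : ∀ σ, ∀ z ∈ gr.component σ, f z = 0 → z ∈ T) {x : N} (hx : f x = 0) : x ∈ T := by
  classical
  obtain ⟨s, hs⟩ := gr.exists_finset_mem_iSup x
  induction s using Finset.induction_on generalizing x with
  | empty =>
    simp only [Finset.notMem_empty, iSup_false, iSup_bot, AddSubgroup.mem_bot] at hs
    exact hs ▸ T.zero_mem
  | insert σ s hσ ih =>
    rw [Finset.iSup_insert] at hs
    have := gr.normal σ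
    obtain ⟨a, ha, b, hb, rfl⟩ := AddSubgroup.mem_sup_of_normal_left.mp hs
    rw [map_add] at hx
    have hfb : f b ∈ ⨆ τ ∈ ({σ}ᶜ : Set G), grM.component τ :=
      biSup_mono (f := grM.component) (fun τ hτ => ne_of_mem_of_not_mem hτ hσ)
        (map_mem_biSup grM hf hb)
    have hfa : f a = 0 := by
      refine grM.eq_zero_of_mem_of_mem_iSup (hf σ a ha) ?_
      rw [eq_neg_of_add_eq_zero_left hx]
      exact neg_mem hfb
    rw [hfa, zero_add] at hx
    exact add_mem (hT σ a ha hfa) (ih hx hb)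

theorem IsGraded.map {H : AddSubgroup N} (hH : gr.IsGraded H) : grM.IsGraded (H.map f) := by
  refine le_antisymm ?_ ((AddSubgroup.closure_le _).mpr Set.inter_subset_left)
  conv_lhs => rw [hH]
  rw [AddMonoidHom.map_closure]
  refine AddSubgroup.closure_mono ?_
  rintro _ ⟨x, ⟨hxH, hx⟩, rfl⟩
  obtain ⟨σ, hσ⟩ := Set.mem_iUnion.mp hx
  exact ⟨AddSubgroup.mem_map_of_mem f hxH, Set.mem_iUnion.mpr ⟨σ, hf σ x hσ⟩⟩

theorem IsGraded.comap (hsurj : Function.Surjective f) {K : AddSubgroup M}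
    (hK : grM.IsGraded K) : gr.IsGraded (K.comap f) := by
  set T := AddSubgroup.closure ((K.comap f : Set N) ∩ ⋃ σ, (gr.component σ : Set N))
  refine le_antisymm (fun x hx => ?_) ((AddSubgroup.closure_le _).mpr Set.inter_subset_left)
  have hhom : ∀ σ, ∀ z ∈ gr.component σ, f z ∈ K → z ∈ T := fun σ z hz hzK =>
    AddSubgroup.subset_closure ⟨hzK, Set.mem_iUnion.mpr ⟨σ, hz⟩⟩
  have hKT : K ≤ T.map f := by
    rw [hK, AddSubgroup.closure_le]
    rintro y ⟨hyK, hy⟩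
    obtain ⟨σ, hσ⟩ := Set.mem_iUnion.mp hy
    obtain ⟨z, hz, rfl⟩ := (map_component_eq grM hf hsurj σ).ge hσ
    exact ⟨z, hhom σ z hz hyK, rfl⟩
  obtain ⟨t, ht, hft⟩ := hKT hx
  have hxt : x - t ∈ T := mem_of_map_eq_zero grM hf
    (fun σ z hz hz0 => hhom σ z hz (hz0 ▸ K.zero_mem)) (by rw [map_sub, hft, sub_self])
  simpa only [sub_add_cancel] using add_mem hxt ht

end NearRingGrading

/-- The image under a surjective graded homomorphism of a graded weakly
prime ideal containing the kernel is a graded weakly prime ideal. -/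
theorem image_weaklyPrime {M : Type*} [NearRing M]
    (grN : NearRingGrading G N) (grM : NearRingGrading G M)
    (φ : NearRingHom N M) (hsurj : Function.Surjective φ.toFun)
    (hgr : ∀ σ : G, φ.toFun '' (grN.component σ : Set N) ⊆ (grM.component σ : Set M))
    (P : NearRingIdeal N) (hwp : grN.IsGradedWeaklyPrime P)
    (hker : {x : N | φ.toFun x = 0} ⊆ (P : Set N)) :
    ∃ Q : NearRingIdeal M, (Q : Set M) = φ.toFun '' (P : Set N) ∧
      grM.IsGradedWeaklyPrime Q := by
  have hf : ∀ σ, ∀ x ∈ grN.component σ, φ.toAddMonoidHom x ∈ grM.component σ :=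
    fun σ x hx => hgr σ ⟨x, hx, rfl⟩
  refine ⟨NearRingIdeal.map hsurj P, NearRingIdeal.coe_map hsurj P,
    NearRingGrading.IsGraded.map grM hf hwp.1, fun I J hI hJ hIJ hIJP => ?_⟩
  have hprod := NearRingIdeal.image_idealProd_comap hsurj I J
  have hne : idealProd (I.comap φ) (J.comap φ) ≠ {0} := by
    intro h
    rw [h, Set.image_singleton, ← φ.coe_toAddMonoidHom, map_zero] at hprod
    exact hIJ hprod.symm
  have hle : idealProd (I.comap φ) (J.comap φ) ⊆ P := by
    rw [← NearRingIdeal.preimage_image_eq_of_ker_subset hker, ← NearRingIdeal.coe_map hsurj,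
      ← Set.image_subset_iff, hprod]
    exact hIJP
  have hgraded {K : NearRingIdeal M} (hK : grM.IsGradedIdeal K) : grN.IsGradedIdeal (K.comap φ) :=
    NearRingGrading.IsGraded.comap grM hf hsurj hK
  rw [NearRingIdeal.coe_map, ← Set.image_preimage_eq I hsurj, ← Set.image_preimage_eq J hsurj]
  exact (hwp.2 _ _ (hgraded hI) (hgraded hJ) hne hle).imp Set.image_mono Set.image_mono
end

section
/- Let N and M be G-graded near-rings and P a graded ideal of N. Then P is a graded almost prime ideal of N if and only if P × M is a graded almost prime ideal of the product graded near-ring N × M. -/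
open Pointwise

variable {G : Type*} [Monoid G] {N : Type*} [NearRing N]

section ProductNearRing

variable {N' M : Type*}

private theorem NearRing.zero_mul' [NearRing N'] (n : N') : (0 : N') * n = 0 := by
  have h := NearRing.right_distrib (0 : N') 0 n
  rw [add_zero] at h
  exact (left_eq_add.mp h)

instance [NearRing N'] [NearRing M] : NearRing (N' × M) :=
  { (inferInstance : AddGroup (N' × M)), (inferInstance : Semigroup (N' × M)) with
    right_distrib := fun a b c =>
      Prod.ext (NearRing.right_distrib a.1 b.1 c.1) (NearRing.right_distrib a.2 b.2 c.2) }

/-- The product ideal `I × J` of the product near-ring. -/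
def NearRingIdeal.prod [NearRing N'] [NearRing M] (I : NearRingIdeal N') (J : NearRingIdeal M) :
    NearRingIdeal (N' × M) where
  carrier := I.carrier.prod J.carrier
  normal := ⟨fun n hn g => ⟨I.normal.conj_mem n.1 hn.1 g.1, J.normal.conj_mem n.2 hn.2 g.2⟩⟩
  mul_mem_right := fun i n hi => ⟨I.mul_mem_right i.1 n.1 hi.1, J.mul_mem_right i.2 n.2 hi.2⟩
  quasi_left := fun m n i hi => ⟨I.quasi_left m.1 n.1 i.1 hi.1, J.quasi_left m.2 n.2 i.2 hi.2⟩

/-- The whole near-ring, as an ideal. -/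
def topIdeal (M : Type*) [NearRing M] : NearRingIdeal M where
  carrier := ⊤
  normal := ⟨fun _ _ _ => trivial⟩
  mul_mem_right := fun _ _ _ => trivial
  quasi_left := fun _ _ _ _ => trivial

/-- The zero ideal. -/
def botIdeal (M : Type*) [NearRing M] : NearRingIdeal M where
  carrier := ⊥
  normal := ⟨fun n hn g => by
    simp only [AddSubgroup.mem_bot] at hn ⊢
    simp [hn]⟩
  mul_mem_right := fun i n hi => by
    simp only [AddSubgroup.mem_bot] at hi ⊢
    simp [hi, NearRing.zero_mul']
  quasi_left := fun m n i hi => by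
    simp only [AddSubgroup.mem_bot] at hi ⊢
    simp [hi]

end ProductNearRing

/-!
The first projection `A ↦ A.fst` and `I ↦ I × M` form a Galois connection between ideals of
`N × M` and of `N` (`A ⊆ I × M ↔ A.fst ⊆ I`) with `(I × M).fst = I`, and both preserve gradedness
for the componentwise grading. The projection commutes with ideal products, and since the second
coordinates of any product `AB` lie in `MM`, `AB ⊆ (P × M)² = P² × MM` iff `A.fst B.fst ⊆ P²`.
So each clause of the almost-prime condition for `P × M` at `A, B` is the corresponding clause
for `P` at `A.fst, B.fst`; taking `A = I × M`, `B = J × M` gives the converse.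
-/

namespace NearRingIdeal

variable {M : Type*} [NearRing M]

def fst (A : NearRingIdeal (N × M)) : NearRingIdeal N where
  carrier := A.carrier.map (AddMonoidHom.fst N M)
  normal := ⟨by
    rintro _ ⟨p, hp, rfl⟩ g
    exact ⟨(g, 0) + p + -(g, 0), A.normal.conj_mem p hp (g, 0), rfl⟩⟩
  mul_mem_right := by
    rintro _ n ⟨p, hp, rfl⟩
    exact ⟨p * (n, 0), A.mul_mem_right p (n, 0) hp, rfl⟩
  quasi_left := by
    rintro m n _ ⟨p, hp, rfl⟩
    exact ⟨(m, 0) * ((n, 0) + p) - (m, 0) * (n, 0), A.quasi_left (m, 0) (n, 0) p hp, rfl⟩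

theorem coe_fst (A : NearRingIdeal (N × M)) : (A.fst : Set N) = Prod.fst '' (A : Set (N × M)) :=
  AddSubgroup.coe_map _ _

theorem coe_prod_top (I : NearRingIdeal N) :
    (I.prod (topIdeal M) : Set (N × M)) = (I : Set N) ×ˢ Set.univ :=
  rfl

theorem fst_prod_top (I : NearRingIdeal N) : (I.prod (topIdeal M)).fst = I :=
  SetLike.coe_injective <| by
    rw [coe_fst, coe_prod_top, Set.fst_image_prod _ Set.univ_nonempty]

theorem subset_prod_top_iff {S : Set (N × M)} {I : NearRingIdeal N} :
    S ⊆ I.prod (topIdeal M) ↔ Prod.fst '' S ⊆ I := by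
  rw [coe_prod_top, Set.prod_univ, Set.image_subset_iff]

theorem coe_subset_prod_top_iff {A : NearRingIdeal (N × M)} {I : NearRingIdeal N} :
    (A : Set (N × M)) ⊆ I.prod (topIdeal M) ↔ (A.fst : Set N) ⊆ I := by
  rw [subset_prod_top_iff, coe_fst]

end NearRingIdeal

open NearRingIdeal

section ProductIdeals

variable {M : Type*} [NearRing M]

theorem idealProd_fst (A B : NearRingIdeal (N × M)) :
    idealProd A.fst B.fst = Prod.fst '' idealProd A B := by
  rw [idealProd, idealProd, coe_fst, coe_fst]
  exact (Set.image_mul (MulHom.fst N M)).symm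

theorem idealProd_prod_top (I J : NearRingIdeal N) :
    idealProd (I.prod (topIdeal M)) (J.prod (topIdeal M)) =
      idealProd I J ×ˢ ((Set.univ : Set M) * Set.univ) := by
  rw [idealProd, coe_prod_top, coe_prod_top, Set.prod_mul_prod_comm, idealProd]

theorem idealProd_subset_prod_top_iff {A B : NearRingIdeal (N × M)} {P : NearRingIdeal N} :
    idealProd A B ⊆ P.prod (topIdeal M) ↔ idealProd A.fst B.fst ⊆ P := by
  rw [subset_prod_top_iff, idealProd_fst]

theorem idealProd_subset_idealProd_prod_top_iff {A B : NearRingIdeal (N × M)}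
    {P Q : NearRingIdeal N} :
    idealProd A B ⊆ idealProd (P.prod (topIdeal M)) (Q.prod (topIdeal M)) ↔
      idealProd A.fst B.fst ⊆ idealProd P Q := by
  rw [idealProd_prod_top, idealProd_fst]
  refine ⟨fun h => Set.image_subset_iff.2 (h.trans (Set.prod_subset_preimage_fst _ _)),
    fun h => ?_⟩
  have hsnd : Prod.snd '' idealProd A B ⊆ (Set.univ : Set M) * Set.univ :=
    (Set.image_mul (MulHom.snd N M)).subset.trans
      (Set.mul_subset_mul (Set.subset_univ _) (Set.subset_univ _))
  exact Set.subset_prod.trans (Set.prod_mono h hsnd)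

theorem almostPrime_condition_prod_top_iff (A B : NearRingIdeal (N × M)) (P : NearRingIdeal N) :
    (idealProd A B ⊆ P.prod (topIdeal M) →
        ¬ idealProd A B ⊆ idealProd (P.prod (topIdeal M)) (P.prod (topIdeal M)) →
          (A : Set (N × M)) ⊆ P.prod (topIdeal M) ∨ (B : Set (N × M)) ⊆ P.prod (topIdeal M)) ↔
      (idealProd A.fst B.fst ⊆ P → ¬ idealProd A.fst B.fst ⊆ idealProd P P →
          (A.fst : Set N) ⊆ P ∨ (B.fst : Set N) ⊆ P) := by
  rw [idealProd_subset_prod_top_iff, idealProd_subset_idealProd_prod_top_iff,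
    coe_subset_prod_top_iff, coe_subset_prod_top_iff]

end ProductIdeals

namespace NearRingGrading

variable {M : Type*} [NearRing M]

theorem isGradedIdeal_iff_le (gr : NearRingGrading G N) (I : NearRingIdeal N) :
    gr.IsGradedIdeal I ↔
      I.carrier ≤ AddSubgroup.closure ((I : Set N) ∩ ⋃ σ : G, (gr.component σ : Set N)) :=
  ⟨le_of_eq, fun h => h.antisymm (AddSubgroup.closure_le _ |>.2 Set.inter_subset_left)⟩

variable {grN : NearRingGrading G N} {grM : NearRingGrading G M}
  {grNM : NearRingGrading G (N × M)}

theorem IsGradedIdeal.fst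
    (hcomp : ∀ σ : G, (grNM.component σ : Set (N × M)) ⊆
      (grN.component σ : Set N) ×ˢ (grM.component σ : Set M))
    {A : NearRingIdeal (N × M)} (hA : grNM.IsGradedIdeal A) : grN.IsGradedIdeal A.fst := by
  rw [isGradedIdeal_iff_le]
  change A.carrier.map (AddMonoidHom.fst N M) ≤ _
  rw [hA, AddMonoidHom.map_closure]
  refine AddSubgroup.closure_mono ?_
  rintro _ ⟨p, ⟨hpA, hp⟩, rfl⟩
  obtain ⟨σ, hσ⟩ := Set.mem_iUnion.1 hp
  exact ⟨coe_fst A ▸ Set.mem_image_of_mem _ hpA, Set.mem_iUnion.2 ⟨σ, (hcomp σ hσ).1⟩⟩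

theorem IsGradedIdeal.prod_top
    (hcomp : ∀ σ : G, (grN.component σ : Set N) ×ˢ (grM.component σ : Set M) ⊆
      grNM.component σ)
    {I : NearRingIdeal N} (hI : grN.IsGradedIdeal I) :
    grNM.IsGradedIdeal (I.prod (topIdeal M)) := by
  rw [isGradedIdeal_iff_le]
  change I.carrier.prod ⊤ ≤ _
  have htop : (⊤ : AddSubgroup M) = AddSubgroup.closure (⋃ σ : G, (grM.component σ : Set M)) := by
    rw [← grM.span_top, AddSubgroup.iSup_eq_closure]
  rw [AddSubgroup.prod_le_iff, hI, htop, AddMonoidHom.map_closure, AddMonoidHom.map_closure]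
  constructor
  · refine AddSubgroup.closure_mono ?_
    rintro _ ⟨x, ⟨hxI, hx⟩, rfl⟩
    obtain ⟨σ, hσ⟩ := Set.mem_iUnion.1 hx
    exact ⟨⟨hxI, trivial⟩, Set.mem_iUnion.2 ⟨σ, hcomp σ ⟨hσ, (grM.component σ).zero_mem⟩⟩⟩
  · refine AddSubgroup.closure_mono ?_
    rintro _ ⟨y, hy, rfl⟩
    obtain ⟨σ, hσ⟩ := Set.mem_iUnion.1 hy
    exact ⟨⟨I.carrier.zero_mem, trivial⟩,
      Set.mem_iUnion.2 ⟨σ, hcomp σ ⟨(grN.component σ).zero_mem, hσ⟩⟩⟩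

end NearRingGrading

theorem almostPrime_iff_prod_almostPrime_general {M : Type*} [NearRing M]
    (grN : NearRingGrading G N) (grM : NearRingGrading G M)
    (grNM : NearRingGrading G (N × M))
    (hcomp : ∀ σ : G, (grNM.component σ : Set (N × M)) =
      (grN.component σ : Set N) ×ˢ (grM.component σ : Set M))
    (P : NearRingIdeal N) :
    grN.IsGradedAlmostPrime P ↔ grNM.IsGradedAlmostPrime (P.prod (topIdeal M)) := by
  have hfst := fun σ => (hcomp σ).subset
  have hprod := fun σ => (hcomp σ).symm.subset
  constructor
  · rintro ⟨hP, hprime⟩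
    refine ⟨hP.prod_top hprod, fun A B hA hB => ?_⟩
    rw [almostPrime_condition_prod_top_iff]
    exact hprime _ _ (hA.fst hfst) (hB.fst hfst)
  · rintro ⟨hP, hprime⟩
    refine ⟨fst_prod_top (M := M) P ▸ hP.fst hfst, fun I J hI hJ => ?_⟩
    have h := hprime _ _ (hI.prod_top hprod) (hJ.prod_top hprod)
    rwa [almostPrime_condition_prod_top_iff, fst_prod_top, fst_prod_top] at h

/-- `P` is a graded almost prime ideal of `N` iff `P × M` is a graded
almost prime ideal of the product graded near-ring `N × M`. -/
theorem almostPrime_iff_prod_almostPrime {M : Type*} [NearRing M]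
    (grN : NearRingGrading G N) (grM : NearRingGrading G M)
    (grNM : NearRingGrading G (N × M))
    (hcomp : ∀ σ : G, (grNM.component σ : Set (N × M)) =
      (grN.component σ : Set N) ×ˢ (grM.component σ : Set M))
    (P : NearRingIdeal N) (hP : grN.IsGradedIdeal P) :
    grN.IsGradedAlmostPrime P ↔ grNM.IsGradedAlmostPrime (P.prod (topIdeal M)) :=
  almostPrime_iff_prod_almostPrime_general grN grM grNM hcomp P
end
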